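/- Packing bound for concentrated centers (Claim used in the generic minimax upper bound): Let n be a positive integer, let α ∈ (0, 1/2), let u > 0, and let T be a finite nonempty subset of ℝⁿ. Suppose x₁, …, x_m ∈ ℝⁿ satisfy ‖x_i − x_j‖₂ ≥ 2u for all i ≠ j, and that for each i there exists a subset S_i ⊆ T with |S_i| ≥ α·|T| such that for every unit vector v ∈ ℝⁿ the number of points x ∈ S_i with |⟨v, x − x_i⟩| ≥ u is at most (α/10)·|S_i|. Then m < 5/α. -/

import Mathlib

/-!
A point of `S i ∩ S j` is at distance at least `u` from `x i` or from `x j` along the direction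
joining these two centres, which are `2u` apart; so concentration gives
`|S i ∩ S j| ≤ (α/10)(|S i| + |S j|)` for `i ≠ j`. Counting incidences between `T` and the `S i`,
Cauchy–Schwarz gives `(∑ |S i|)² ≤ |T| ∑_{i,j} |S i ∩ S j| ≤ |T| (1 + αm/5) ∑ |S i|`, while
`∑ |S i| ≥ mα|T|`. Hence `mα ≤ 1 + αm/5`, that is `m ≤ 5/(4α)`.
-/

open Finset

open scoped RealInnerProductSpace

section Concentration

variable {E : Type*} [NormedAddCommGroup E] [InnerProductSpace ℝ E]

theorem le_abs_inner_sub_or_le_abs_inner_sub {u : ℝ} {v a b : E} (h : 2 * u ≤ ⟪v, b - a⟫)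
    (z : E) : u ≤ |⟪v, z - a⟫| ∨ u ≤ |⟪v, z - b⟫| := by
  have hdiff : ⟪v, z - a⟫ - ⟪v, z - b⟫ = ⟪v, b - a⟫ := by
    rw [← inner_sub_right, sub_sub_sub_cancel_left]
  by_contra! hlt
  linarith [(abs_lt.mp hlt.1).2, (abs_lt.mp hlt.2).1]

theorem card_inter_le_card_filter_add_card_filter [DecidableEq E] {u : ℝ} {v a b : E}
    (h : 2 * u ≤ ⟪v, b - a⟫) (s t : Finset E) :
    #(s ∩ t) ≤ #{z ∈ s | u ≤ |⟪v, z - a⟫|} + #{z ∈ t | u ≤ |⟪v, z - b⟫|} := by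
  refine (card_le_card fun z hz => ?_).trans (card_union_le _ _)
  rw [mem_inter] at hz
  rcases le_abs_inner_sub_or_le_abs_inner_sub h z with ha | hb
  · exact mem_union_left _ (mem_filter.mpr ⟨hz.1, ha⟩)
  · exact mem_union_right _ (mem_filter.mpr ⟨hz.2, hb⟩)

theorem exists_norm_eq_one_inner_eq_norm {w : E} (hw : w ≠ 0) :
    ∃ v : E, ‖v‖ = 1 ∧ ⟪v, w⟫ = ‖w‖ := by
  refine ⟨‖w‖⁻¹ • w, norm_smul_inv_norm hw, ?_⟩
  rw [real_inner_smul_left, real_inner_self_eq_norm_sq]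
  field_simp [norm_ne_zero_iff.mpr hw]

theorem card_inter_le_of_two_mul_le_dist [DecidableEq E] {u β : ℝ} (hu : 0 < u) {a b : E}
    (hab : 2 * u ≤ ‖a - b‖) {s t : Finset E}
    (hs : ∀ v : E, ‖v‖ = 1 → (#{z ∈ s | u ≤ |⟪v, z - a⟫|} : ℝ) ≤ β * #s)
    (ht : ∀ v : E, ‖v‖ = 1 → (#{z ∈ t | u ≤ |⟪v, z - b⟫|} : ℝ) ≤ β * #t) :
    (#(s ∩ t) : ℝ) ≤ β * (#s + #t) := by
  have hne : b - a ≠ 0 := by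
    rw [sub_ne_zero]
    rintro rfl
    simp only [sub_self, norm_zero] at hab
    linarith
  obtain ⟨v, hv, hvw⟩ := exists_norm_eq_one_inner_eq_norm hne
  have hsep : 2 * u ≤ ⟪v, b - a⟫ := by rwa [hvw, norm_sub_rev]
  calc (#(s ∩ t) : ℝ)
      ≤ #{z ∈ s | u ≤ |⟪v, z - a⟫|} + #{z ∈ t | u ≤ |⟪v, z - b⟫|} := by
        exact_mod_cast card_inter_le_card_filter_add_card_filter hsep s t
    _ ≤ β * #s + β * #t := add_le_add (hs v hv) (ht v hv)
    _ = β * (#s + #t) := by ring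

end Concentration

section DoubleCounting

variable {ι α : Type*} [Fintype ι] [DecidableEq α] {S : ι → Finset α} {T : Finset α}

theorem sum_card_eq_sum_card_filter_mem (hS : ∀ i, S i ⊆ T) :
    ∑ i, #(S i) = ∑ z ∈ T, #{i | z ∈ S i} := by
  have hfilter : ∀ i, {z ∈ T | z ∈ S i} = S i := fun i => filter_mem_eq_inter.trans
    (inter_eq_right.mpr (hS i))
  simpa [bipartiteAbove, bipartiteBelow, hfilter] using
    sum_card_bipartiteAbove_eq_sum_card_bipartiteBelow (s := univ) (t := T) fun i z => z ∈ S i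

theorem sq_sum_card_le_card_mul_sum_sum_card_inter (hS : ∀ i, S i ⊆ T) :
    (∑ i, #(S i)) ^ 2 ≤ #T * ∑ i, ∑ j, #(S i ∩ S j) := by
  have hpairs : ∑ i, ∑ j, #(S i ∩ S j) = ∑ z ∈ T, #{i | z ∈ S i} ^ 2 := by
    rw [← Fintype.sum_prod_type', sum_card_eq_sum_card_filter_mem
      (S := fun p : ι × ι => S p.1 ∩ S p.2) fun p => inter_subset_left.trans (hS p.1)]
    refine sum_congr rfl fun z _ => ?_
    rw [sq, ← card_product, ← filter_product]
    simp [mem_inter]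
  rw [sum_card_eq_sum_card_filter_mem hS, hpairs]
  exact sq_sum_le_card_mul_sum_sq

end DoubleCounting

theorem sum_sum_le_of_diag_le_of_offDiag_le {ι : Type*} [Fintype ι] [DecidableEq ι]
    {f : ι → ι → ℝ} {a : ι → ℝ} {β : ℝ} (hβ : 0 ≤ β) (ha : ∀ i, 0 ≤ a i) (hdiag : ∀ i, f i i ≤ a i)
    (hoff : ∀ i j, i ≠ j → f i j ≤ β * (a i + a j)) :
    ∑ i, ∑ j, f i j ≤ (1 + 2 * β * Fintype.card ι) * ∑ i, a i := by
  have hle : ∀ i j, f i j ≤ (if i = j then a i else 0) + β * (a i + a j) := by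
    intro i j
    by_cases hij : i = j
    · subst hij
      simp only [if_true]
      linarith [mul_nonneg hβ (add_nonneg (ha i) (ha i)), hdiag i]
    · simpa [hij] using hoff i j hij
  calc ∑ i, ∑ j, f i j ≤ ∑ i, ∑ j, ((if i = j then a i else 0) + β * (a i + a j)) :=
        sum_le_sum fun i _ => sum_le_sum fun j _ => hle i j
    _ = (1 + 2 * β * Fintype.card ι) * ∑ i, a i := by
        simp only [sum_add_distrib, sum_ite_eq, mem_univ, if_true, ← mul_sum, sum_const,
          card_univ, nsmul_eq_mul]
        ring

open Classical in
theorem stmt_1 (n : ℕ) (α u : ℝ) (hα0 : 0 < α) (hu : 0 < u)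
    (T : Finset (EuclideanSpace ℝ (Fin n))) (hT : T.Nonempty)
    (m : ℕ) (x : Fin m → EuclideanSpace ℝ (Fin n))
    (hsep : ∀ i j, i ≠ j → 2 * u ≤ ‖x i - x j‖)
    (S : Fin m → Finset (EuclideanSpace ℝ (Fin n)))
    (hsub : ∀ i, S i ⊆ T)
    (hcard : ∀ i, α * (T.card : ℝ) ≤ ((S i).card : ℝ))
    (hconc : ∀ i, ∀ v : EuclideanSpace ℝ (Fin n), ‖v‖ = 1 →
      (((S i).filter fun z => u ≤ |(inner ℝ v (z - x i) : ℝ)|).card : ℝ) ≤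
        (α / 10) * ((S i).card : ℝ)) :
    (m : ℝ) < 5 / α := by
  have hpair : ∀ i j, i ≠ j → ((S i ∩ S j).card : ℝ) ≤ α / 10 * ((S i).card + (S j).card) :=
    fun i j hij => card_inter_le_of_two_mul_le_dist hu (hsep i j hij) (hconc i) (hconc j)
  have hcs : (∑ i, ((S i).card : ℝ)) ^ 2 ≤ T.card * ∑ i, ∑ j, ((S i ∩ S j).card : ℝ) := by
    exact_mod_cast sq_sum_card_le_card_mul_sum_sum_card_inter hsub
  set A : ℝ := ∑ i, ((S i).card : ℝ)
  have hoverlap : ∑ i, ∑ j, ((S i ∩ S j).card : ℝ) ≤ (1 + 2 * (α / 10) * m) * A := by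
    have := sum_sum_le_of_diag_le_of_offDiag_le (f := fun i j => ((S i ∩ S j).card : ℝ))
      (by positivity) (fun i => Nat.cast_nonneg _) (fun i => by rw [inter_self]) hpair
    rwa [Fintype.card_fin] at this
  have hupper : A ^ 2 ≤ T.card * ((1 + 2 * (α / 10) * m) * A) :=
    hcs.trans (by gcongr)
  have hlower : m * α * T.card ≤ A := by
    simpa [mul_assoc] using sum_le_sum fun i (_ : i ∈ univ) => hcard i
  have hT0 : (0 : ℝ) < T.card := by exact_mod_cast hT.card_pos
  have hA : A ≤ T.card * (1 + 2 * (α / 10) * m) := by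
    rcases (hlower.trans' (by positivity)).eq_or_lt with hA0 | hA0
    · rw [← hA0]; positivity
    · exact le_of_mul_le_mul_right (by rw [← sq, mul_assoc]; exact hupper) hA0
  have hmα : m * α ≤ 1 + 2 * (α / 10) * m :=
    le_of_mul_le_mul_right (by linarith) hT0
  rw [lt_div_iff₀ hα0]
  linarith
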